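/- Let α, β be R-related idempotent partial transformations of {1,...,n} with common domain A of size m < n and rank k. Let α', β' be their total extensions sending every c ∉ A to a₀α and a₀β respectively (for a fixed a₀ ∈ A), and let ε be the total idempotent transformation given by iε = xα if i = xβ (x ∈ A) and iε = i otherwise. Then εα' = α', εα = α, βε = α, αε = α, and consequently ε singularizes the square (α, β, α', β'). -/

import Mathlib

attribute [local instance] Classical.propDecidable

/-- The monoid of partial transformations of `{1,…,n}`, written as partial maps
on `Fin n`, composed left-to-right: `x(αβ) = (xα)β`. -/
def PT (n : ℕ) : Type := Fin n → Option (Fin n)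

instance (n : ℕ) : Mul (PT n) := ⟨fun α β x => (α x).bind β⟩
instance (n : ℕ) : One (PT n) := ⟨fun x => some x⟩

instance (n : ℕ) : Monoid (PT n) where
  mul_assoc a b c := funext fun x => by
    show ((a x).bind b).bind c = (a x).bind fun y => (b y).bind c
    cases a x <;> rfl
  one_mul a := funext fun _ => rfl
  mul_one a := funext fun x => by
    show (a x).bind some = a x
    cases a x <;> rfl

namespace PT
variable {n : ℕ}

/-- The domain of a partial transformation. -/
def dom (α : PT n) : Set (Fin n) := {x | α x ≠ none}

/-- The image of a partial transformation. -/
def im (α : PT n) : Set (Fin n) := {y | ∃ x, α x = some y}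

/-- The kernel: the partial equivalence `{(x,y) : x,y ∈ dom α, xα = yα}`. -/
def ker (α : PT n) : Fin n → Fin n → Prop :=
  fun x y => x ∈ α.dom ∧ y ∈ α.dom ∧ α x = α y

/-- The principal left ideal `PT_n · α` (the monoid contains `1`, so it contains `α`). -/
def leftIdeal (α : PT n) : Set (PT n) := Set.range fun γ => γ * α

/-- The principal right ideal `α · PT_n`. -/
def rightIdeal (α : PT n) : Set (PT n) := Set.range fun γ => α * γ

end PT

/-- The total extension of `α` sending every point outside `A` to `a₀α`. -/
noncomputable def PT.totalExt {n : ℕ} (α : PT n) (A : Set (Fin n)) (a₀ : Fin n) :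
    PT n := fun x => if x ∈ A then α x else α a₀

/-- The partial transformation `ε` with `iε = xα` whenever `i = xβ`, and `iε = i`
otherwise. -/
noncomputable def PT.eps {n : ℕ} (α β : PT n) : PT n := fun i =>
  if h : ∃ x, β x = some i then α h.choose else some i

/-- `ε` singularizes the square `(e, f, g, h)` (case (a) or case (b)). -/
def Singularizes {n : ℕ} (ε e f g h : PT n) : Prop :=
  (ε * e = e ∧ ε * g = g ∧ e = f * ε) ∨ (e = ε * g ∧ e * ε = e ∧ f * ε = f)

/-! On the image of `β`, which consists of fixed points of `β`, the map `ε` agrees with `α`, and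
off it `ε` is the identity. Since `α ∈ β · PT_n`, the kernel of `β` is contained in that of `α`,
which gives `βε = α`; the remaining identities reduce to `α` being idempotent and `α'` agreeing
with `α` on `A ⊇ im α ∪ im β`. -/

namespace PT
variable {n : ℕ}

theorem mul_apply (α β : PT n) (x : Fin n) : (α * β) x = (α x).bind β := rfl

theorem mul_apply_of_eq_none {α : PT n} (β : PT n) {x : Fin n} (hx : α x = none) :
    (α * β) x = none := by
  rw [mul_apply, hx]; rfl

theorem mul_apply_of_eq_some {α : PT n} (β : PT n) {x y : Fin n} (hx : α x = some y) :
    (α * β) x = β y := by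
  rw [mul_apply, hx]; rfl

theorem apply_eq_some_self_of_isIdempotentElem {α : PT n} (hα : IsIdempotentElem α)
    {x y : Fin n} (h : α x = some y) : α y = some y := by
  rw [← h, ← mul_apply_of_eq_some α h, hα]

theorem im_subset_dom_of_isIdempotentElem {α : PT n} (hα : IsIdempotentElem α) :
    α.im ⊆ α.dom := by
  rintro y ⟨x, hx⟩
  show α y ≠ none
  rw [apply_eq_some_self_of_isIdempotentElem hα hx]
  exact Option.some_ne_none y

section RightIdeal
variable {α β : PT n} (hαβ : α ∈ β.rightIdeal)
include hαβ

theorem apply_eq_apply_of_mem_rightIdeal {x y : Fin n} (hxy : β x = β y) : α x = α y := by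
  obtain ⟨γ, rfl⟩ := hαβ
  simp only [mul_apply, hxy]

theorem apply_eq_none_of_mem_rightIdeal {x : Fin n} (hx : β x = none) : α x = none := by
  obtain ⟨γ, rfl⟩ := hαβ
  exact mul_apply_of_eq_none γ hx

end RightIdeal

theorem totalExt_apply_of_mem (α : PT n) {A : Set (Fin n)} (a₀ : Fin n) {x : Fin n}
    (hx : x ∈ A) : totalExt α A a₀ x = α x := if_pos hx

theorem mul_totalExt_of_im_subset {γ : PT n} (α : PT n) {A : Set (Fin n)} (a₀ : Fin n)
    (h : γ.im ⊆ A) : γ * totalExt α A a₀ = γ * α := by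
  funext x
  rcases hx : γ x with _ | y
  · rw [mul_apply_of_eq_none _ hx, mul_apply_of_eq_none _ hx]
  · rw [mul_apply_of_eq_some _ hx, mul_apply_of_eq_some _ hx,
      totalExt_apply_of_mem α a₀ (h ⟨x, hx⟩)]

section Eps
variable {α β : PT n}

theorem eps_apply_of_notMem_im {i : Fin n} (hi : i ∉ β.im) : eps α β i = some i :=
  dif_neg hi

theorem eps_apply_of_apply_eq_some (hαβ : α ∈ β.rightIdeal) {x i : Fin n}
    (h : β x = some i) : eps α β i = α x := by
  have hi : ∃ z, β z = some i := ⟨x, h⟩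
  rw [eps, dif_pos hi]
  exact apply_eq_apply_of_mem_rightIdeal hαβ (hi.choose_spec.trans h.symm)

theorem eps_apply_of_mem_im (hβ : IsIdempotentElem β) (hαβ : α ∈ β.rightIdeal) {i : Fin n}
    (hi : i ∈ β.im) : eps α β i = α i := by
  obtain ⟨x, hx⟩ := hi
  exact eps_apply_of_apply_eq_some hαβ (apply_eq_some_self_of_isIdempotentElem hβ hx)

theorem eps_mul_eq_self_of_forall_mem_im (hβ : IsIdempotentElem β) (hαβ : α ∈ β.rightIdeal)
    {δ : PT n} (h : ∀ i ∈ β.im, (α * δ) i = δ i) : eps α β * δ = δ := by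
  funext i
  by_cases hi : i ∈ β.im
  · rw [mul_apply, eps_apply_of_mem_im hβ hαβ hi, ← mul_apply, h i hi]
  · rw [mul_apply_of_eq_some _ (eps_apply_of_notMem_im hi)]

theorem eps_mul_self (hα : IsIdempotentElem α) (hβ : IsIdempotentElem β)
    (hαβ : α ∈ β.rightIdeal) : eps α β * α = α :=
  eps_mul_eq_self_of_forall_mem_im hβ hαβ fun i _ => by rw [hα]

theorem eps_mul_totalExt (hα : IsIdempotentElem α) (hβ : IsIdempotentElem β)
    (hαβ : α ∈ β.rightIdeal) {A : Set (Fin n)} (a₀ : Fin n) (hαA : α.im ⊆ A)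
    (hβA : β.im ⊆ A) : eps α β * totalExt α A a₀ = totalExt α A a₀ :=
  eps_mul_eq_self_of_forall_mem_im hβ hαβ fun i hi => by
    rw [mul_totalExt_of_im_subset α a₀ hαA, hα, totalExt_apply_of_mem α a₀ (hβA hi)]

theorem mul_eps_of_mem_rightIdeal (hαβ : α ∈ β.rightIdeal) : β * eps α β = α := by
  funext x
  rcases hx : β x with _ | i
  · rw [mul_apply_of_eq_none _ hx, apply_eq_none_of_mem_rightIdeal hαβ hx]
  · rw [mul_apply_of_eq_some _ hx, eps_apply_of_apply_eq_some hαβ hx]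

theorem self_mul_eps (hα : IsIdempotentElem α) (hβ : IsIdempotentElem β)
    (hαβ : α ∈ β.rightIdeal) : α * eps α β = α := by
  funext x
  rcases hx : α x with _ | y
  · exact mul_apply_of_eq_none _ hx
  have hy := apply_eq_some_self_of_isIdempotentElem hα hx
  rw [mul_apply_of_eq_some _ hx]
  by_cases hyβ : y ∈ β.im
  · rw [eps_apply_of_mem_im hβ hαβ hyβ, hy]
  · exact eps_apply_of_notMem_im hyβ

end Eps

end PT

theorem stmt_7_general (n : ℕ) (α β : PT n) (A : Set (Fin n)) (a₀ : Fin n)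
    (hα : α * α = α) (hβ : β * β = β)
    (hR : α.rightIdeal = β.rightIdeal)
    (hdα : α.dom = A) (hdβ : β.dom = A) :
    PT.eps α β * PT.totalExt α A a₀ = PT.totalExt α A a₀ ∧
    PT.eps α β * α = α ∧
    β * PT.eps α β = α ∧
    α * PT.eps α β = α ∧
    Singularizes (PT.eps α β) α β (PT.totalExt α A a₀) (PT.totalExt β A a₀) := by
  have hαβ : α ∈ β.rightIdeal := hR ▸ ⟨1, mul_one α⟩
  have hαA : α.im ⊆ A := hdα ▸ PT.im_subset_dom_of_isIdempotentElem hα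
  have hβA : β.im ⊆ A := hdβ ▸ PT.im_subset_dom_of_isIdempotentElem hβ
  have hεα' := PT.eps_mul_totalExt hα hβ hαβ a₀ hαA hβA
  have hεα := PT.eps_mul_self hα hβ hαβ
  have hβε := PT.mul_eps_of_mem_rightIdeal hαβ
  exact ⟨hεα', hεα, hβε, PT.self_mul_eps hα hβ hαβ, Or.inl ⟨hεα, hεα', hβε.symm⟩⟩

/-- For `R`-related idempotents `α, β` with common domain `A` of size `m < n` and
rank `k`, with total extensions `α', β'` and `ε` as above: `εα' = α'`, `εα = α`,
`βε = α`, `αε = α`, and consequently `ε` singularizes the square `(α, β, α', β')`. -/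
theorem stmt_7 (n m k : ℕ) (α β : PT n) (A : Set (Fin n)) (a₀ : Fin n)
    (hα : α * α = α) (hβ : β * β = β)
    (hR : α.rightIdeal = β.rightIdeal)
    (hdα : α.dom = A) (hdβ : β.dom = A) (hA : A.ncard = m) (hmn : m < n)
    (hrkα : α.im.ncard = k) (hrkβ : β.im.ncard = k) (ha₀ : a₀ ∈ A) :
    PT.eps α β * PT.totalExt α A a₀ = PT.totalExt α A a₀ ∧
    PT.eps α β * α = α ∧
    β * PT.eps α β = α ∧
    α * PT.eps α β = α ∧
    Singularizes (PT.eps α β) α β (PT.totalExt α A a₀) (PT.totalExt β A a₀) :=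
  stmt_7_general n α β A a₀ hα hβ hR hdα hdβ
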